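/- Let W : ZMod 2 → Y → ℝ≥0 and W' : ZMod 2 → Y' → ℝ≥0 be binary-input discrete memoryless channels with finite output alphabets. If W is degraded with respect to W', then the plus-polarized channel W⁺ is degraded with respect to W'⁺, where W⁺ : ZMod 2 → (Y × Y × ZMod 2) → ℝ≥0 is defined by W⁺(u₂)(y₁, y₂, u₁) = (1/2) · W(u₁ + u₂)(y₁) · W(u₂)(y₂). -/

import Mathlib

open Finset

/-- A binary-input discrete memoryless channel: the outputs sum to 1 for each input. -/
def IsBDMC {Y : Type*} [Fintype Y] (W : ZMod 2 → Y → NNReal) : Prop :=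
  ∀ u : ZMod 2, ∑ y, W u y = 1

/-- `W` is degraded with respect to `W'`. -/
def Degraded {Y Y' : Type*} [Fintype Y] [Fintype Y'] (W : ZMod 2 → Y → NNReal)
    (W' : ZMod 2 → Y' → NNReal) : Prop :=
  ∃ P : Y' → Y → NNReal, (∀ y', ∑ y, P y' y = 1) ∧
    ∀ (u : ZMod 2) (y : Y), W u y = ∑ y', W' u y' * P y' y

/-- The plus-polarized channel `W⁺`: `W⁺(u₂)(y₁, y₂, u₁) = (1/2)·W(u₁+u₂)(y₁)·W(u₂)(y₂)`. -/
noncomputable def plusChannel {Y : Type*} [Fintype Y] (W : ZMod 2 → Y → NNReal) :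
    ZMod 2 → Y × Y × ZMod 2 → NNReal :=
  fun u₂ o => (1 / 2 : NNReal) * W (o.2.2 + u₂) o.1 * W u₂ o.2.1

/-! If `W` is `W'` followed by a kernel `P`, then `W⁺` is `W'⁺` followed by the kernel that
applies `P` to each of the two outputs `y₁`, `y₂` independently and passes `u₁` through: the
product `W(u₁+u₂)(y₁)·W(u₂)(y₂)` expands into the product of the two sums over `Y'`. -/

noncomputable def plusKernel {Y Y' : Type*} (P : Y' → Y → NNReal) :
    Y' × Y' × ZMod 2 → Y × Y × ZMod 2 → NNReal :=
  fun o' o => P o'.1 o.1 * P o'.2.1 o.2.1 * if o'.2.2 = o.2.2 then 1 else 0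

theorem sum_plusKernel {Y Y' : Type*} [Fintype Y] {P : Y' → Y → NNReal}
    (hP : ∀ y', ∑ y, P y' y = 1) (o' : Y' × Y' × ZMod 2) : ∑ o, plusKernel P o' o = 1 := by
  obtain ⟨y₁', y₂', u₁'⟩ := o'
  simp only [plusKernel, Fintype.sum_prod_type, mul_ite, mul_one, mul_zero, sum_ite_eq,
    mem_univ, if_true, ← mul_sum, hP]

theorem plusChannel_eq_sum_mul_plusKernel {Y Y' : Type*} [Fintype Y] [Fintype Y']
    {W : ZMod 2 → Y → NNReal} {W' : ZMod 2 → Y' → NNReal} {P : Y' → Y → NNReal}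
    (hW : ∀ u y, W u y = ∑ y', W' u y' * P y' y) (u₂ : ZMod 2) (o : Y × Y × ZMod 2) :
    plusChannel W u₂ o = ∑ o', plusChannel W' u₂ o' * plusKernel P o' o := by
  obtain ⟨y₁, y₂, u₁⟩ := o
  simp only [plusChannel, plusKernel, Fintype.sum_prod_type, mul_ite, mul_one, mul_zero,
    sum_ite_eq', mem_univ, if_true]
  rw [hW, hW, mul_assoc, sum_mul_sum, mul_sum]
  refine sum_congr rfl fun y₁' _ => ?_
  rw [mul_sum]
  refine sum_congr rfl fun y₂' _ => ?_
  ring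

theorem plus_degraded_of_degraded_general {Y Y' : Type*} [Fintype Y] [Fintype Y']
    (W : ZMod 2 → Y → NNReal) (W' : ZMod 2 → Y' → NNReal)
    (h : Degraded W W') :
    Degraded (plusChannel W) (plusChannel W') := by
  obtain ⟨P, hP, hW⟩ := h
  exact ⟨plusKernel P, sum_plusKernel hP, plusChannel_eq_sum_mul_plusKernel hW⟩

theorem plus_degraded_of_degraded {Y Y' : Type*} [Fintype Y] [Fintype Y']
    (W : ZMod 2 → Y → NNReal) (W' : ZMod 2 → Y' → NNReal)
    (hW : IsBDMC W) (hW' : IsBDMC W') (h : Degraded W W') :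
    Degraded (plusChannel W) (plusChannel W') :=
  plus_degraded_of_degraded_general W W' h
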